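/- If n has NAF-bitlength k (i.e. n ∈ I_k), then deg(B_{2^k - n}) = deg(B_n), where B denotes the Stern polynomial. -/

import Mathlib

open Polynomial in
/-- The Stern polynomial: `B 0 = 0`, `B 1 = 1`, `B (2n) = t * B n`, `B (2n+1) = B n + B (n+1)`. -/
noncomputable def sternP : ℕ → Polynomial ℕ
  | 0 => 0
  | 1 => 1
  | n + 2 =>
    if (n + 2) % 2 = 0 then X * sternP (n / 2 + 1)
    else sternP (n / 2 + 1) + sternP (n / 2 + 2)
decreasing_by all_goals omega

/-- The digits of a BSD representation lie in {-1, 0, 1}. -/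
def IsBSDDigits {i : ℕ} (b : Fin i → ℤ) : Prop := ∀ j, b j ∈ ({-1, 0, 1} : Set ℤ)

/-- The value represented by the digit string `b` (least significant digit `b 0`). -/
def bsdVal {i : ℕ} (b : Fin i → ℤ) : ℤ := ∑ j : Fin i, b j * 2 ^ (j : ℕ)

/-- `b` is a (not necessarily reduced) non-adjacent form digit string of length `k`:
digits in {-1,0,1}, no two adjacent digits both nonzero, and nonzero leading digit
(when `k > 0`). -/
def IsReducedNAF {k : ℕ} (b : Fin k → ℤ) : Prop :=
  IsBSDDigits b ∧
  (∀ j : Fin k, ∀ h : (j : ℕ) + 1 < k, b j = 0 ∨ b ⟨(j : ℕ) + 1, h⟩ = 0) ∧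
  (∀ h : 0 < k, b ⟨k - 1, Nat.sub_lt h one_pos⟩ ≠ 0)

/-- `m` has a reduced NAF representation of bitlength `k`. -/
def HasNAFLen (m : ℤ) (k : ℕ) : Prop :=
  ∃ b : Fin k → ℤ, IsReducedNAF b ∧ bsdVal b = m

/-- `I k`: the set of positive integers of NAF-bitlength `k`. -/
def NAFInterval (k : ℕ) : Set ℕ := {n : ℕ | HasNAFLen (n : ℤ) k}

/-- `a k = min I k`: `a 1 = 1`, `a 2 = 2`, `a k = 2^(k-2) + a (k-2)`. -/
def aseq : ℕ → ℕ
  | 0 => 0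
  | 1 => 1
  | 2 => 2
  | k + 3 => 2 ^ (k + 1) + aseq (k + 1)

/-- The NAF-bitlength of `n`. -/
noncomputable def nafLen (n : ℕ) : ℕ := sInf {k : ℕ | HasNAFLen (n : ℤ) k}

/-- The minimal Hamming weight of a BSD representation of `n` of length
equal to its NAF-bitlength. -/
noncomputable def minWeight (n : ℕ) : ℕ :=
  sInf {w : ℕ | ∃ b : Fin (nafLen n) → ℤ,
    IsBSDDigits b ∧ bsdVal b = (n : ℤ) ∧ {j | b j ≠ 0}.ncard = w}

/-- `Z n`: the number of zeros in an optimal (minimal-weight) BSD representation of `n`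
of length equal to its NAF-bitlength. -/
noncomputable def Zfun (n : ℕ) : ℕ := nafLen n - minWeight n

/-- `M n`: the number of optimal (minimal-weight) BSD representations of `n`
of length equal to its NAF-bitlength. -/
noncomputable def Mfun (n : ℕ) : ℕ :=
  {b : Fin (nafLen n) → ℤ |
    IsBSDDigits b ∧ bsdVal b = (n : ℤ) ∧ {j | b j ≠ 0}.ncard = minWeight n}.ncard

/-!
A non-adjacent form of length `k` with leading term `±2^(k-1)` has its lower digits
summing to less than `2^(k-1)/3` in absolute value, so `n ∈ I_k` forces `2^k < 3n < 2^(k+1)`.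
On this window `n ↦ 2^k - n` is compatible with the Stern recursion:
`2^k - 2m = 2(2^(k-1) - m)` and `2^k - (2m+1) = 2(2^(k-1) - m - 1) + 1`. Since there is no
cancellation in `ℕ[X]`, `deg B_{2m} = deg B_m + 1` and `deg B_{2m+1} = max (deg B_m) (deg B_{m+1})`,
and induction on `k` goes through; at the two ends of the window, where `m` or `m + 1` falls
outside the previous window, the missing degree is recovered from one more step of the recursion.
-/

namespace Polynomial

variable {R : Type*} [Semiring R] [Subsingleton (AddUnits R)]

theorem add_ne_zero_of_right_ne_zero {p q : R[X]} (hq : q ≠ 0) : p + q ≠ 0 := fun h =>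
  hq <| ext fun i => (add_eq_zero.1 (by simpa using congrArg (coeff · i) h)).2

theorem natDegree_add_eq_max (p q : R[X]) : (p + q).natDegree = max p.natDegree q.natDegree := by
  rcases eq_or_ne p 0 with rfl | hp
  · simp
  rcases eq_or_ne q 0 with rfl | hq
  · simp
  refine le_antisymm (natDegree_add_le p q) (max_le ?_ ?_) <;>
    refine le_natDegree_of_ne_zero fun h => ?_ <;> rw [coeff_add] at h
  · exact leadingCoeff_ne_zero.2 hp (add_eq_zero.1 h).1
  · exact leadingCoeff_ne_zero.2 hq (add_eq_zero.1 h).2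

end Polynomial

open Polynomial

theorem sternP_two_mul (n : ℕ) : sternP (2 * n) = X * sternP n := by
  rcases n with _ | m
  · simp [sternP]
  · rw [show 2 * (m + 1) = 2 * m + 2 by ring, sternP, if_pos (by omega),
      show 2 * m / 2 = m by omega]

theorem sternP_two_mul_add_one (n : ℕ) : sternP (2 * n + 1) = sternP n + sternP (n + 1) := by
  rcases n with _ | m
  · simp [sternP]
  · rw [show 2 * (m + 1) + 1 = 2 * m + 1 + 2 by ring, sternP, if_neg (by omega),
      show (2 * m + 1) / 2 = m by omega]

theorem sternP_ne_zero {n : ℕ} (hn : n ≠ 0) : sternP n ≠ 0 := by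
  induction n using Nat.strong_induction_on with
  | _ n ih =>
  obtain ⟨m, rfl | rfl⟩ := Nat.even_or_odd' n
  · rw [sternP_two_mul]
    exact mul_ne_zero X_ne_zero (ih m (by omega) (by omega))
  · rcases eq_or_ne m 0 with rfl | hm
    · simp [sternP]
    · rw [sternP_two_mul_add_one]
      exact add_ne_zero_of_right_ne_zero (ih (m + 1) (by omega) (by omega))

theorem natDegree_sternP_two_mul {n : ℕ} (hn : n ≠ 0) :
    (sternP (2 * n)).natDegree = (sternP n).natDegree + 1 := by
  rw [sternP_two_mul, natDegree_mul X_ne_zero (sternP_ne_zero hn), natDegree_X, add_comm]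

theorem natDegree_sternP_two_mul_add_one (n : ℕ) :
    (sternP (2 * n + 1)).natDegree = max (sternP n).natDegree (sternP (n + 1)).natDegree := by
  rw [sternP_two_mul_add_one, natDegree_add_eq_max]

theorem natDegree_sternP_two_pow_sub {k n : ℕ} (h₁ : 2 ^ k < 3 * n) (h₂ : 3 * n < 2 ^ (k + 1)) :
    (sternP (2 ^ k - n)).natDegree = (sternP n).natDegree := by
  induction k generalizing n with
  | zero => omega
  | succ k ih =>
  have hQ₀ : 0 < 2 ^ k := by positivity
  have hQ₃ : ¬ 3 ∣ 2 ^ k := fun h => by simpa using Nat.prime_three.dvd_of_dvd_pow h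
  rw [pow_succ] at h₁ ⊢ ih
  rw [pow_succ, pow_succ] at h₂
  generalize 2 ^ k = Q at *
  obtain ⟨m, rfl | rfl⟩ := Nat.even_or_odd' n
  · rw [show Q * 2 - 2 * m = 2 * (Q - m) by omega, natDegree_sternP_two_mul (by omega),
      natDegree_sternP_two_mul (by omega), ih (by omega) (by omega)]
  rw [show Q * 2 - (2 * m + 1) = 2 * (Q - m - 1) + 1 by omega, natDegree_sternP_two_mul_add_one,
    natDegree_sternP_two_mul_add_one, show Q - m - 1 + 1 = Q - m by omega]
  -- the induction hypothesis covers both `m` and `m + 1` unless `Q = 3m + 1` or `2Q = 3m + 2`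
  by_cases hlow : Q = 3 * m + 1
  · obtain rfl | hm := eq_or_ne m 0
    · simp [hlow]
    have ih_succ := ih (n := m + 1) (by omega) (by omega)
    rw [show Q - (m + 1) = 2 * m by omega, natDegree_sternP_two_mul (by omega)] at ih_succ
    rw [show Q - m - 1 = 2 * m by omega, show Q - m = 2 * m + 1 by omega,
      natDegree_sternP_two_mul (by omega), natDegree_sternP_two_mul_add_one]
    omega
  by_cases hhigh : 2 * Q = 3 * m + 2
  · have ih_m := ih (n := m) (by omega) (by omega)
    have hdouble := natDegree_sternP_two_mul (n := Q - m - 1) (by omega)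
    have hodd := natDegree_sternP_two_mul_add_one (Q - m - 1)
    rw [show 2 * (Q - m - 1) = m by omega] at hdouble
    rw [show 2 * (Q - m - 1) + 1 = m + 1 by omega, show Q - m - 1 + 1 = Q - m by omega] at hodd
    omega
  have ih_m := ih (n := m) (by omega) (by omega)
  have ih_succ := ih (n := m + 1) (by omega) (by omega)
  rw [show Q - (m + 1) = Q - m - 1 by omega] at ih_succ
  rw [ih_m, ih_succ, max_comm]

def IsNonAdjacent {k : ℕ} (b : Fin k → ℤ) : Prop :=
  ∀ j : Fin k, ∀ h : (j : ℕ) + 1 < k, b j = 0 ∨ b ⟨(j : ℕ) + 1, h⟩ = 0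

section NAF

variable {k : ℕ}

theorem IsBSDDigits.init {b : Fin (k + 1) → ℤ} (hb : IsBSDDigits b) : IsBSDDigits (Fin.init b) :=
  fun j => hb j.castSucc

theorem IsBSDDigits.abs_le_one {b : Fin k → ℤ} (hb : IsBSDDigits b) (j : Fin k) : |b j| ≤ 1 := by
  rcases hb j with h | h | (h : b j = 1) <;> simp [h]

theorem IsBSDDigits.abs_mul_two_pow {b : Fin k → ℤ} (hb : IsBSDDigits b) {j : Fin k}
    (hj : b j ≠ 0) (i : ℕ) : |b j * 2 ^ i| = 2 ^ i := by
  rcases hb j with h | h | (h : b j = 1) <;> simp_all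

theorem IsNonAdjacent.init {b : Fin (k + 1) → ℤ} (hb : IsNonAdjacent b) :
    IsNonAdjacent (Fin.init b) :=
  fun j hj => hb j.castSucc (by simp)

theorem bsdVal_eq_bsdVal_init_add (b : Fin (k + 1) → ℤ) :
    bsdVal b = bsdVal (Fin.init b) + b (Fin.last k) * 2 ^ k := by
  simp [bsdVal, Fin.sum_univ_castSucc, Fin.init]

theorem bsdVal_eq_bsdVal_init_init_add {b : Fin (k + 2) → ℤ} (hb : IsNonAdjacent b)
    (htop : b (Fin.last (k + 1)) ≠ 0) :
    bsdVal b = bsdVal (Fin.init (Fin.init b)) + b (Fin.last (k + 1)) * 2 ^ (k + 1) := by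
  have hpen : Fin.init b (Fin.last k) = 0 := (hb ⟨k, by omega⟩ (by simp)).resolve_right htop
  rw [bsdVal_eq_bsdVal_init_add b, bsdVal_eq_bsdVal_init_add (Fin.init b), hpen, zero_mul,
    add_zero]

theorem three_mul_abs_bsdVal_lt {b : Fin k → ℤ} (hd : IsBSDDigits b) (hna : IsNonAdjacent b) :
    3 * |bsdVal b| < 2 ^ (k + 1) := by
  induction k using Nat.strong_induction_on with
  | _ k ih =>
  match k, b, hd, hna with
  | 0, b, _, _ => simp [bsdVal]
  | 1, b, hd, _ =>
    have := hd.abs_le_one 0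
    simp only [bsdVal, Fin.sum_univ_one, Fin.val_zero, pow_zero, mul_one]
    omega
  | k + 2, b, hd, hna =>
    by_cases htop : b (Fin.last (k + 1)) = 0
    · rw [bsdVal_eq_bsdVal_init_add, htop, zero_mul, add_zero]
      calc 3 * |bsdVal (Fin.init b)| < 2 ^ (k + 2) := ih (k + 1) (by omega) hd.init hna.init
        _ < 2 ^ (k + 3) := by gcongr <;> omega
    · have hrest := ih k (by omega) hd.init.init hna.init.init
      have hsum := abs_add_le (bsdVal (Fin.init (Fin.init b))) (b (Fin.last (k + 1)) * 2 ^ (k + 1))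
      rw [hd.abs_mul_two_pow htop, ← bsdVal_eq_bsdVal_init_init_add hna htop] at hsum
      rw [pow_succ _ (k + 2), pow_succ _ (k + 1)]
      linarith

theorem two_pow_lt_three_mul_abs_bsdVal {b : Fin (k + 1) → ℤ} (hd : IsBSDDigits b)
    (hna : IsNonAdjacent b) (htop : b (Fin.last k) ≠ 0) : 2 ^ (k + 1) < 3 * |bsdVal b| := by
  rcases k with _ | k
  · have hval : bsdVal b = b (Fin.last 0) * 2 ^ 0 := by simp [bsdVal]
    rw [hval, hd.abs_mul_two_pow htop]
    norm_num
  · have hrest := three_mul_abs_bsdVal_lt hd.init.init hna.init.init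
    have hdiff := abs_add' (b (Fin.last (k + 1)) * 2 ^ (k + 1)) (bsdVal (Fin.init (Fin.init b)))
    rw [hd.abs_mul_two_pow htop] at hdiff
    rw [bsdVal_eq_bsdVal_init_init_add hna htop, pow_succ _ (k + 1)]
    linarith

theorem HasNAFLen.three_mul_abs_mem_Ioo {m : ℤ} (h : HasNAFLen m (k + 1)) :
    3 * |m| ∈ Set.Ioo (2 ^ (k + 1)) (2 ^ (k + 2)) := by
  obtain ⟨b, ⟨hd, hna, htop⟩, rfl⟩ := h
  exact ⟨two_pow_lt_three_mul_abs_bsdVal hd hna (htop k.succ_pos),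
    three_mul_abs_bsdVal_lt hd hna⟩

end NAF

theorem stern_deg_sibling_general (n k : ℕ) (h : HasNAFLen (n : ℤ) k) :
    (sternP (2 ^ k - n)).natDegree = (sternP n).natDegree := by
  cases k with
  | zero =>
    obtain ⟨b, -, hb⟩ := h
    obtain rfl : n = 0 := by simpa [bsdVal, eq_comm] using hb
    simp [sternP]
  | succ k =>
    obtain ⟨hlo, hhi⟩ := h.three_mul_abs_mem_Ioo
    rw [abs_of_nonneg (by positivity)] at hlo hhi
    exact natDegree_sternP_two_pow_sub (by exact_mod_cast hlo) (by exact_mod_cast hhi)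

theorem stern_deg_sibling (n k : ℕ) (hn : 0 < n) (h : HasNAFLen (n : ℤ) k) :
    (sternP (2 ^ k - n)).natDegree = (sternP n).natDegree :=
  stern_deg_sibling_general n k h
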